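/- Let p and q be relatively prime integers with p ≥ 1, q ≥ 1, and p/q ∉ {1, 2, 3, 4}. Let △_m be the Farey triangle containing p/q that is closest in the Farey tree Σ to △^{(0)}, let △_V be the unique triangle adjacent to △_m in Σ that does not contain p/q, and set z = min{⌊p/q⌋, 3}. Then d(△_V, △^{(z)}) = d(△_V, △^{(0)}) − d(△^{(z)}, △^{(0)}) = d(△_V, △^{(0)}) − z. -/

import Mathlib

/-- A Farey vertex is an element of `ℚ ∪ {∞}`; `none` represents `∞`. -/
abbrev FareyVertex := Option ℚ

/-- The numerator of the reduced form `a/b` (with `b ≥ 0`) of a Farey vertex; `∞ = 1/0`. -/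
def fnum : FareyVertex → ℤ
  | none => 1
  | some r => r.num

/-- The denominator of the reduced form `a/b` (with `b ≥ 0`) of a Farey vertex; `∞ = 1/0`. -/
def fden : FareyVertex → ℤ
  | none => 0
  | some r => (r.den : ℤ)

/-- Two Farey vertices with reduced forms `a/b` and `c/d` are Farey-neighbors if `|ad - bc| = 1`. -/
def FareyNeighbor (x y : FareyVertex) : Prop :=
  |fnum x * fden y - fden x * fnum y| = 1

/-- A Farey triangle: a set of three distinct pairwise Farey-neighbor Farey vertices. -/
@[ext]
structure FareyTriangle where
  verts : Finset FareyVertex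
  card_eq : verts.card = 3
  neighbors : ∀ x ∈ verts, ∀ y ∈ verts, x ≠ y → FareyNeighbor x y

/-- The Farey tree `Σ`: vertices are the Farey triangles, two triangles being adjacent
if and only if their intersection has exactly two elements. -/
def fareyTree : SimpleGraph FareyTriangle where
  Adj T T' := (T.verts ∩ T'.verts).card = 2
  symm := by
    constructor
    intro T T' h
    rwa [Finset.inter_comm]
  loopless := by
    constructor
    intro T h
    rw [Finset.inter_self, T.card_eq] at h
    omega

/-- The Farey vertex represented by the (not necessarily reduced) fraction `a/b`,
with the conventions `a/b = (-a)/(-b)` and `x/0 = ∞`. -/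
def mkFarey (a b : ℤ) : FareyVertex :=
  if b = 0 then none else some ((a : ℚ) / (b : ℚ))

lemma neighbor_int_succ (i : ℤ) :
    FareyNeighbor (some (i : ℚ)) (some ((i + 1 : ℤ) : ℚ)) := by
  have hn : (((i + 1 : ℤ) : ℚ)).num = i + 1 := Rat.num_intCast _
  have hd : (((i + 1 : ℤ) : ℚ)).den = 1 := Rat.den_intCast _
  simp only [FareyNeighbor, fnum, fden, hn, hd, Rat.num_intCast, Rat.den_intCast]
  simp

lemma neighbor_int_inf (i : ℤ) : FareyNeighbor (some (i : ℚ)) none := by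
  simp [FareyNeighbor, fnum, fden]

lemma neighbor_symm {x y : FareyVertex} (h : FareyNeighbor x y) : FareyNeighbor y x := by
  unfold FareyNeighbor at h ⊢
  rw [← abs_neg]
  convert h using 2
  ring

/-- `△⁽ⁱ⁾`: the Farey triangle with vertices `i`, `i+1` and `∞`. -/
def stdTriangle (i : ℤ) : FareyTriangle where
  verts := {some (i : ℚ), some ((i + 1 : ℤ) : ℚ), none}
  card_eq := by
    have h1 : (some (i : ℚ) : FareyVertex) ≠ some ((i + 1 : ℤ) : ℚ) := by
      simp only [ne_eq, Option.some.injEq]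
      intro h
      have : (i : ℚ) = (i : ℚ) + 1 := by push_cast at h ⊢; linarith
      linarith
    simp [Finset.card_insert_of_notMem, h1]
  neighbors := by
    intro x hx y hy hxy
    have h1 := neighbor_int_succ i
    have h2 := neighbor_int_inf i
    have h3 := neighbor_int_inf (i + 1)
    simp only [Finset.mem_insert, Finset.mem_singleton] at hx hy
    rcases hx with rfl | rfl | rfl <;> rcases hy with rfl | rfl | rfl <;>
      first
        | exact absurd rfl hxy
        | assumption
        | exact neighbor_symm h1
        | exact neighbor_symm h2
        | exact neighbor_symm h3

/-- `S p q` is the sum of the partial quotients in the expansion of `p/q`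
as a regular continued fraction (for coprime `p ≥ 0`, `q ≥ 1`), with `S 0 1 = 0`. -/
def S (p q : ℕ) : ℕ :=
  if h : q = 0 then 0
  else p / q + S q (p % q)
termination_by q
decreasing_by exact Nat.mod_lt p (Nat.pos_of_ne_zero h)



/-!
Let `x = p/q` and `z = min ⌊x⌋ 3`; for `z = 0` there is nothing to prove. Otherwise `z < x`, and
since no Farey edge joins two numbers lying strictly on opposite sides of an integer, every
neighbor of `x`, hence every vertex of `△_m`, is `≥ z`. A triangle with all finite vertices `≥ z`
can be adjacent to one with a vertex `< z` only across the edge `{z, ∞}`, i.e. as `△⁽ᶻ⁾ — △⁽ᶻ⁻¹⁾`;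
for `△_m, △_V` this would force `x = z + 1 = 4`. So `△_V` also lies to the right of `z`, every path
from it to `△⁽⁰⁾` passes through `△⁽ᶻ⁾`, and `d(△_V, △⁽⁰⁾) = d(△_V, △⁽ᶻ⁾) + d(△⁽ᶻ⁾, △⁽⁰⁾)`, the last
term being `z` by the same crossing argument. This uses that `Σ` is connected, which follows by
descent on the sum of denominators: in a triangle without `∞` the vertex of largest denominator is
the mediant of the other two, and replacing it by their difference gives an adjacent triangle.
-/

namespace SimpleGraph

variable {V : Type*} {G : SimpleGraph V} {u v w : V}

lemma Connected.dist_eq_add_of_forall_mem_support (hG : G.Connected)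
    (h : ∀ W : G.Walk u w, v ∈ W.support) : G.dist u w = G.dist u v + G.dist v w := by
  classical
  refine le_antisymm hG.dist_triangle ?_
  obtain ⟨W, hW⟩ := hG.exists_walk_length_eq_dist u w
  calc G.dist u v + G.dist v w
      ≤ (W.takeUntil v (h W)).length + (W.dropUntil v (h W)).length :=
        add_le_add (G.dist_le _) (G.dist_le _)
    _ = G.dist u w := by rw [← Walk.length_append, Walk.take_spec, hW]

end SimpleGraph

lemma fden_some_pos (r : ℚ) : 0 < fden (some r) := by
  simpa [fden] using r.pos

lemma ne_of_fareyNeighbor {x y : FareyVertex} (h : FareyNeighbor x y) : x ≠ y := by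
  rintro rfl
  simp [FareyNeighbor, mul_comm] at h

lemma exists_intCast_of_fareyNeighbor_none {r : ℚ} (h : FareyNeighbor (some r) none) :
    ∃ m : ℤ, r = m := by
  simp only [FareyNeighbor, fnum, fden, mul_zero, mul_one, zero_sub, abs_neg,
    Int.abs_natCast, Nat.cast_eq_one] at h
  exact ⟨r.num, ((Rat.den_eq_one_iff r).mp h).symm⟩

lemma eq_add_one_or_eq_add_one_of_fareyNeighbor {m n : ℤ}
    (h : FareyNeighbor (some (m : ℚ)) (some (n : ℚ))) : m = n + 1 ∨ n = m + 1 := by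
  simp only [FareyNeighbor, fnum, fden, Rat.num_intCast, Rat.den_intCast, Nat.cast_one,
    mul_one, one_mul] at h
  rcases abs_eq (zero_le_one' ℤ) |>.mp h with h | h <;> omega

lemma not_fareyNeighbor_of_lt_of_lt {r s : ℚ} {i : ℤ} (hr : r < i) (hs : i < s) :
    ¬ FareyNeighbor (some r) (some s) := by
  have hb := fden_some_pos r
  have hd := fden_some_pos s
  simp only [fden] at hb hd
  have hr' : r.num < i * r.den := by
    have : (r.num : ℚ) < i * r.den := by
      rwa [← div_lt_iff₀ (by positivity), Rat.num_div_den]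
    exact_mod_cast this
  have hs' : i * s.den < s.num := by
    have : (i : ℚ) * s.den < s.num := by
      rwa [← lt_div_iff₀ (by positivity), Rat.num_div_den]
    exact_mod_cast this
  have : (r.den : ℤ) + s.den ≤ r.den * s.num - r.num * s.den := by nlinarith
  simp only [FareyNeighbor, fnum, fden]
  intro h
  rcases abs_eq (zero_le_one' ℤ) |>.mp h with h | h <;> omega

lemma exists_signs_of_common_fareyNeighbor {x y v : FareyVertex} (hxy : FareyNeighbor x y)
    (hxv : FareyNeighbor x v) (hyv : FareyNeighbor y v) :
    ∃ s t : ℤ, |s| = 1 ∧ |t| = 1 ∧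
      fnum v = s * fnum x + t * fnum y ∧ fden v = s * fden x + t * fden y := by
  unfold FareyNeighbor at hxy hxv hyv
  set D := fnum x * fden y - fden x * fnum y
  have hD : D * D = 1 := by rw [← abs_mul_abs_self, hxy, one_mul]
  refine ⟨-D * (fnum y * fden v - fden y * fnum v), D * (fnum x * fden v - fden x * fnum v),
    ?_, ?_, ?_, ?_⟩
  · rw [abs_mul, abs_neg, hxy, hyv, one_mul]
  · rw [abs_mul, hxy, hxv, one_mul]
  · linear_combination (-fnum v) * hD
  · linear_combination (-fden v) * hD

lemma mkFarey_coords_eq_sign_mul {u e : ℤ} (h : IsCoprime u e) :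
    ∃ s : ℤ, |s| = 1 ∧ fnum (mkFarey u e) = s * u ∧ fden (mkFarey u e) = s * e := by
  rcases lt_trichotomy e 0 with he | rfl | he
  · have hc : Nat.Coprime (-u).natAbs (-e).natAbs := by
      simpa [Int.isCoprime_iff_gcd_eq_one, Int.gcd] using h
    refine ⟨-1, by simp, ?_, ?_⟩
    · simp only [mkFarey, he.ne, if_false, fnum]
      rw [← neg_div_neg_eq, ← Int.cast_neg, ← Int.cast_neg,
        Rat.num_div_eq_of_coprime (by omega) hc]
      ring
    · simp only [mkFarey, he.ne, if_false, fden]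
      rw [← neg_div_neg_eq, ← Int.cast_neg, ← Int.cast_neg,
        Rat.den_div_eq_of_coprime (by omega) hc]
      ring
  · refine ⟨u, ?_, ?_, by simp [mkFarey, fden]⟩
    · rw [← Int.isUnit_iff_abs_eq]; exact isCoprime_zero_right.mp h
    · rcases Int.isUnit_iff.mp (isCoprime_zero_right.mp h) with rfl | rfl <;> simp [mkFarey, fnum]
  · have hc : Nat.Coprime u.natAbs e.natAbs := by
      simpa [Int.isCoprime_iff_gcd_eq_one, Int.gcd] using h
    refine ⟨1, by simp, ?_, ?_⟩
    · simp only [mkFarey, he.ne', if_false, fnum, one_mul]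
      exact Rat.num_div_eq_of_coprime he hc
    · simp only [mkFarey, he.ne', if_false, fden, one_mul]
      exact Rat.den_div_eq_of_coprime he hc

lemma exists_fareyNeighbor_fden_eq_abs_sub {x y : FareyVertex} (hxy : FareyNeighbor x y) :
    ∃ w, FareyNeighbor w x ∧ FareyNeighbor w y ∧ |fden w| = |fden x - fden y| := by
  set D := fnum x * fden y - fden x * fnum y
  have hD : D * D = 1 := by rw [← abs_mul_abs_self, hxy, one_mul]
  have hcop : IsCoprime (fnum x - fnum y) (fden x - fden y) :=
    ⟨D * fden y, -D * fnum y, by linear_combination hD⟩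
  obtain ⟨σ, hσ, hwn, hwd⟩ := mkFarey_coords_eq_sign_mul hcop
  refine ⟨_, ?_, ?_, by rw [hwd, abs_mul, hσ, one_mul]⟩ <;> unfold FareyNeighbor <;> rw [hwn, hwd]
  · rw [show σ * (fnum x - fnum y) * fden x - σ * (fden x - fden y) * fnum x = σ * D by ring,
      abs_mul, hσ, hxy, one_mul]
  · rw [show σ * (fnum x - fnum y) * fden y - σ * (fden x - fden y) * fnum y = σ * D by ring,
      abs_mul, hσ, hxy, one_mul]

namespace FareyTriangle

def ofNeighbors {x y z : FareyVertex} (hxy : FareyNeighbor x y) (hxz : FareyNeighbor x z)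
    (hyz : FareyNeighbor y z) : FareyTriangle where
  verts := {x, y, z}
  card_eq := Finset.card_eq_three.mpr
    ⟨x, y, z, ne_of_fareyNeighbor hxy, ne_of_fareyNeighbor hxz, ne_of_fareyNeighbor hyz, rfl⟩
  neighbors := by
    simp only [Finset.mem_insert, Finset.mem_singleton]
    rintro a (rfl | rfl | rfl) b (rfl | rfl | rfl) hab <;>
      first
        | exact absurd rfl hab
        | assumption
        | exact neighbor_symm ‹_›

lemma exists_erase_eq_pair {T : FareyTriangle} {v : FareyVertex} (hv : v ∈ T.verts) :
    ∃ x y, x ≠ y ∧ T.verts.erase v = {x, y} :=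
  Finset.card_eq_two.mp (by rw [Finset.card_erase_of_mem hv, T.card_eq])

lemma eq_stdTriangle_of_none_mem {T : FareyTriangle} (h : none ∈ T.verts) :
    ∃ j : ℤ, T = stdTriangle j := by
  obtain ⟨a, b, hab, hT⟩ := exists_erase_eq_pair h
  have ha : a ∈ T.verts.erase none := by simp [hT]
  have hb : b ∈ T.verts.erase none := by simp [hT]
  rw [Finset.mem_erase] at ha hb
  obtain ⟨r, rfl⟩ := Option.ne_none_iff_exists'.mp ha.1
  obtain ⟨s, rfl⟩ := Option.ne_none_iff_exists'.mp hb.1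
  obtain ⟨m, rfl⟩ := exists_intCast_of_fareyNeighbor_none (T.neighbors _ ha.2 _ h ha.1)
  obtain ⟨n, rfl⟩ := exists_intCast_of_fareyNeighbor_none (T.neighbors _ hb.2 _ h hb.1)
  have hverts : T.verts = {none, some (m : ℚ), some (n : ℚ)} := by
    rw [← Finset.insert_erase h, hT]
  rcases eq_add_one_or_eq_add_one_of_fareyNeighbor (T.neighbors _ ha.2 _ hb.2 hab) with
    rfl | rfl
  · refine ⟨n, FareyTriangle.ext ?_⟩
    rw [hverts, stdTriangle]
    grind
  · refine ⟨m, FareyTriangle.ext ?_⟩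
    rw [hverts, stdTriangle]
    grind

end FareyTriangle

lemma mem_stdTriangle_iff {i : ℤ} {x : FareyVertex} :
    x ∈ (stdTriangle i).verts ↔ x = some (i : ℚ) ∨ x = some ((i + 1 : ℤ) : ℚ) ∨ x = none := by
  simp [stdTriangle]

lemma some_intCast_mem_stdTriangle_iff {i j : ℤ} :
    some (i : ℚ) ∈ (stdTriangle j).verts ↔ i = j ∨ i = j + 1 := by
  simp only [mem_stdTriangle_iff, Option.some.injEq, Int.cast_inj, reduceCtorEq, or_false]

lemma adj_stdTriangle_add_one (i : ℤ) : fareyTree.Adj (stdTriangle (i + 1)) (stdTriangle i) := by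
  show ((stdTriangle (i + 1)).verts ∩ (stdTriangle i).verts).card = 2
  have : (stdTriangle (i + 1)).verts ∩ (stdTriangle i).verts = {some ((i + 1 : ℤ) : ℚ), none} := by
    ext x
    simp only [Finset.mem_inter, mem_stdTriangle_iff, Finset.mem_insert, Finset.mem_singleton]
    constructor
    · rintro ⟨rfl | rfl | rfl, h⟩ <;>
        simp only [Option.some.injEq, Int.cast_inj, reduceCtorEq, or_false, or_true] at h ⊢
      omega
    · rintro (rfl | rfl) <;> simp
  rw [this, Finset.card_pair (by simp)]

lemma reachable_stdTriangle (j : ℤ) : fareyTree.Reachable (stdTriangle j) (stdTriangle 0) := by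
  induction j using Int.induction_on with
  | zero => rfl
  | succ n ih => exact (adj_stdTriangle_add_one n).reachable.trans ih
  | pred n ih => exact (adj_stdTriangle_add_one (-n - 1)).symm.reachable.trans (by simpa using ih)

def denSum (T : FareyTriangle) : ℕ := ∑ x ∈ T.verts, (fden x).toNat

lemma fareyTree_adj_of_verts_eq_insert {T T' : FareyTriangle} {v w : FareyVertex}
    {s : Finset FareyVertex} (hT : T.verts = insert v s) (hT' : T'.verts = insert w s)
    (hv : v ∉ s) (hw : w ∉ s) (hvw : v ≠ w) : fareyTree.Adj T T' := by
  show (T.verts ∩ T'.verts).card = 2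
  have hs : s.card = 2 := by
    have := T.card_eq
    rw [hT, Finset.card_insert_of_notMem hv] at this
    omega
  rwa [hT, hT', Finset.insert_inter_of_notMem (by simp [hvw, hv]),
    Finset.inter_insert_of_notMem hw, Finset.inter_self]

lemma exists_adj_denSum_lt {T : FareyTriangle} (hT : none ∉ T.verts) :
    ∃ T', fareyTree.Adj T T' ∧ denSum T' < denSum T := by
  obtain ⟨v, hv, hmax⟩ := T.verts.exists_max_image fden (Finset.card_pos.mp (by simp [T.card_eq]))
  obtain ⟨x, y, hxy, hxy'⟩ := FareyTriangle.exists_erase_eq_pair hv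
  have hx : x ∈ T.verts.erase v := by simp [hxy']
  have hy : y ∈ T.verts.erase v := by simp [hxy']
  rw [Finset.mem_erase] at hx hy
  have hvxy : v ∉ ({x, y} : Finset FareyVertex) := hxy' ▸ Finset.notMem_erase v T.verts
  have hverts : T.verts = insert v {x, y} := by rw [← hxy', Finset.insert_erase hv]
  have nxy := T.neighbors x hx.2 y hy.2 hxy
  have hb : 0 < fden x := by
    obtain ⟨r, rfl⟩ := Option.ne_none_iff_exists'.mp (ne_of_mem_of_not_mem hx.2 hT)
    exact fden_some_pos r
  have hd : 0 < fden y := by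
    obtain ⟨r, rfl⟩ := Option.ne_none_iff_exists'.mp (ne_of_mem_of_not_mem hy.2 hT)
    exact fden_some_pos r
  -- the vertex of largest denominator is the mediant of the other two
  have hmediant : fden v = fden x + fden y := by
    obtain ⟨s, t, hs, ht, -, hden⟩ := exists_signs_of_common_fareyNeighbor nxy
      (T.neighbors x hx.2 v hv hx.1) (T.neighbors y hy.2 v hv hy.1)
    have := hmax x hx.2
    have := hmax y hy.2
    rcases abs_eq (zero_le_one' ℤ) |>.mp hs with rfl | rfl <;>
      rcases abs_eq (zero_le_one' ℤ) |>.mp ht with rfl | rfl <;> omega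
  obtain ⟨w, nwx, nwy, hw⟩ := exists_fareyNeighbor_fden_eq_abs_sub nxy
  have hwv : fden w < fden v :=
    hmediant ▸ (le_abs_self _).trans_lt (hw ▸ abs_sub_lt_iff.mpr ⟨by omega, by omega⟩)
  refine ⟨FareyTriangle.ofNeighbors nwx nwy nxy, fareyTree_adj_of_verts_eq_insert hverts rfl hvxy
    ?_ (by rintro rfl; omega), ?_⟩
  · simp [ne_of_fareyNeighbor nwx, ne_of_fareyNeighbor nwy]
  · rw [denSum, denSum, hverts, Finset.sum_insert hvxy]
    show ∑ x ∈ insert w {x, y}, _ < _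
    rw [Finset.sum_insert (by simp [ne_of_fareyNeighbor nwx, ne_of_fareyNeighbor nwy])]
    omega

lemma reachable_stdTriangle_zero (T : FareyTriangle) : fareyTree.Reachable T (stdTriangle 0) := by
  induction h : denSum T using Nat.strong_induction_on generalizing T with
  | _ n ih =>
    by_cases hT : none ∈ T.verts
    · obtain ⟨j, rfl⟩ := FareyTriangle.eq_stdTriangle_of_none_mem hT
      exact reachable_stdTriangle j
    · obtain ⟨T', hadj, hlt⟩ := exists_adj_denSum_lt hT
      exact hadj.reachable.trans (ih _ (h ▸ hlt) T' rfl)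

lemma fareyTree_connected : fareyTree.Connected :=
  haveI : Nonempty FareyTriangle := ⟨stdTriangle 0⟩
  ⟨fun T T' => (reachable_stdTriangle_zero T).trans (reachable_stdTriangle_zero T').symm⟩

def RightOf (i : ℤ) (T : FareyTriangle) : Prop :=
  ∀ r : ℚ, some r ∈ T.verts → (i : ℚ) ≤ r

lemma rightOf_stdTriangle_iff {i j : ℤ} : RightOf i (stdTriangle j) ↔ i ≤ j := by
  refine ⟨fun h => by exact_mod_cast h j (by simp [mem_stdTriangle_iff]), fun h r hr => ?_⟩
  rcases mem_stdTriangle_iff.mp hr with hr | hr | hr <;>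
    simp only [Option.some.injEq, reduceCtorEq] at hr
  · rw [hr]; exact_mod_cast h
  · rw [hr]; exact_mod_cast (by omega : i ≤ j + 1)

lemma rightOf_of_mem {i : ℤ} {x : ℚ} {T : FareyTriangle} (hx : some x ∈ T.verts)
    (hi : (i : ℚ) < x) : RightOf i T := by
  intro r hr
  by_cases hrx : some r = some x
  · rw [Option.some_inj.mp hrx]
    exact hi.le
  · by_contra! h
    exact not_fareyNeighbor_of_lt_of_lt h hi (T.neighbors _ hr _ hx hrx)

lemma eq_stdTriangle_of_adj_of_rightOf {i : ℤ} {T T' : FareyTriangle}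
    (hadj : fareyTree.Adj T T') (hR : RightOf i T) (hR' : ¬ RightOf i T') :
    T = stdTriangle i ∧ T' = stdTriangle (i - 1) := by
  obtain ⟨r, hr, hri⟩ : ∃ r : ℚ, some r ∈ T'.verts ∧ r < i := by
    simpa [RightOf] using hR'
  -- a finite common vertex `s ≥ i` of `T` and `T'` is a neighbor of `r < i`, so `s = i`
  have hshared : T.verts ∩ T'.verts ⊆ {none, some (i : ℚ)} := by
    intro x hx
    rw [Finset.mem_inter] at hx
    cases x with
    | none => simp
    | some s =>
      have hs : (i : ℚ) ≤ s := hR s hx.1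
      have hsr : some s ≠ some r := fun h => by
        rw [Option.some_inj.mp h] at hs
        linarith
      rcases hs.eq_or_lt with h | h
      · simp [h]
      · exact absurd (neighbor_symm (T'.neighbors _ hx.2 _ hr hsr))
          (not_fareyNeighbor_of_lt_of_lt hri h)
  have hinter : T.verts ∩ T'.verts = {none, some (i : ℚ)} :=
    Finset.eq_of_subset_of_card_le hshared (by
      rw [Finset.card_pair (by simp)]
      exact (hadj : (T.verts ∩ T'.verts).card = 2).ge)
  have hnone : none ∈ T.verts ∩ T'.verts := by simp [hinter]
  have hi : some (i : ℚ) ∈ T.verts ∩ T'.verts := by simp [hinter]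
  rw [Finset.mem_inter] at hnone hi
  obtain ⟨j, rfl⟩ := FareyTriangle.eq_stdTriangle_of_none_mem hnone.1
  obtain ⟨k, rfl⟩ := FareyTriangle.eq_stdTriangle_of_none_mem hnone.2
  rw [rightOf_stdTriangle_iff] at hR hR'
  rw [some_intCast_mem_stdTriangle_iff, some_intCast_mem_stdTriangle_iff] at hi
  constructor <;> congr 1 <;> omega

lemma rightOf_of_adj {i : ℤ} {x : ℚ} {T T' : FareyTriangle} (hadj : fareyTree.Adj T T')
    (hR : RightOf i T) (hx : some x ∈ T.verts) (hx' : some x ∉ T'.verts) (hxi : x ≠ i + 1) :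
    RightOf i T' := by
  by_contra hR'
  obtain ⟨rfl, rfl⟩ := eq_stdTriangle_of_adj_of_rightOf hadj hR hR'
  rcases mem_stdTriangle_iff.mp hx with h | h | h <;>
    simp only [Option.some.injEq, reduceCtorEq] at h <;> subst h
  · exact hx' (some_intCast_mem_stdTriangle_iff.mpr (Or.inr (by ring)))
  · exact hxi (by push_cast; rfl)

lemma stdTriangle_mem_support_of_rightOf {i : ℤ} {T T' : FareyTriangle}
    (W : fareyTree.Walk T T') (hR : RightOf i T) (hR' : ¬ RightOf i T') :
    stdTriangle i ∈ W.support := by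
  induction W with
  | nil => exact absurd hR hR'
  | @cons T₀ T₁ _ hadj W ih =>
    rw [SimpleGraph.Walk.support_cons]
    by_cases h : RightOf i T₁
    · exact List.mem_cons_of_mem _ (ih h hR')
    · rw [(eq_stdTriangle_of_adj_of_rightOf hadj hR h).1]
      exact List.mem_cons_self

lemma dist_stdTriangle_zero (n : ℕ) : fareyTree.dist (stdTriangle n) (stdTriangle 0) = n := by
  induction n with
  | zero => simp
  | succ n ih =>
    have hcross : ∀ W : fareyTree.Walk (stdTriangle (n + 1 : ℕ)) (stdTriangle 0),
        stdTriangle n ∈ W.support := by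
      intro W
      rcases Nat.eq_zero_or_pos n with rfl | hn
      · simp
      · refine stdTriangle_mem_support_of_rightOf W ?_ ?_ <;>
          rw [rightOf_stdTriangle_iff] <;> omega
    rw [fareyTree_connected.dist_eq_add_of_forall_mem_support hcross, ih,
      SimpleGraph.dist_eq_one_iff_adj.mpr (by simpa using adj_stdTriangle_add_one n), add_comm]

lemma dist_stdTriangle_zero_of_rightOf {n : ℕ} (hn : 1 ≤ n) {T : FareyTriangle}
    (hR : RightOf n T) :
    fareyTree.dist T (stdTriangle 0) = fareyTree.dist T (stdTriangle n) + n := by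
  rw [fareyTree_connected.dist_eq_add_of_forall_mem_support
    (fun W => stdTriangle_mem_support_of_rightOf W hR (by rw [rightOf_stdTriangle_iff]; omega)),
    dist_stdTriangle_zero]

lemma min_floor_three_lt_and_ne_add_one {x : ℚ} (hx : x ∉ ({1, 2, 3, 4} : Set ℚ))
    (hz : 1 ≤ min ⌊x⌋₊ 3) :
    ((min ⌊x⌋₊ 3 : ℕ) : ℚ) < x ∧ x ≠ (min ⌊x⌋₊ 3 : ℕ) + 1 := by
  have hx0 : 0 ≤ x := by
    by_contra! h
    simp [Nat.floor_eq_zero.mpr (h.trans zero_lt_one)] at hz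
  have hfl := Nat.floor_le hx0
  have hlt := Nat.lt_floor_add_one x
  simp only [Set.mem_insert_iff, Set.mem_singleton_iff, not_or] at hx
  rcases min_choice ⌊x⌋₊ 3 with h | h <;> rw [h] at hz ⊢
  · refine ⟨hfl.lt_of_ne fun h' => ?_, hlt.ne⟩
    have : ⌊x⌋₊ ≤ 3 := h ▸ min_le_right _ _
    interval_cases ⌊x⌋₊ <;> simp_all
  · have : (3 : ℚ) ≤ x := le_trans (by exact_mod_cast h ▸ min_le_left _ _) hfl
    push_cast
    exact ⟨this.lt_of_ne (Ne.symm hx.2.2.1), by norm_num [hx.2.2.2]⟩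

theorem dist_triangle_V_to_stdTriangle_z_general (p q : ℕ)
    (hns : (p : ℚ) / (q : ℚ) ∉ ({1, 2, 3, 4} : Set ℚ))
    (Tm : FareyTriangle) (hTm : some ((p : ℚ) / (q : ℚ)) ∈ Tm.verts)
    (TV : FareyTriangle) (hadj : fareyTree.Adj Tm TV)
    (hTV : some ((p : ℚ) / (q : ℚ)) ∉ TV.verts) :
    (fareyTree.dist TV (stdTriangle ((min (p / q) 3 : ℕ) : ℤ)) : ℤ) =
        (fareyTree.dist TV (stdTriangle 0) : ℤ) -
          (fareyTree.dist (stdTriangle ((min (p / q) 3 : ℕ) : ℤ)) (stdTriangle 0) : ℤ) ∧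
    (fareyTree.dist TV (stdTriangle ((min (p / q) 3 : ℕ) : ℤ)) : ℤ) =
        (fareyTree.dist TV (stdTriangle 0) : ℤ) - ((min (p / q) 3 : ℕ) : ℤ) := by
  rw [dist_stdTriangle_zero, ← Nat.floor_div_eq_div (K := ℚ)]
  set z := min ⌊(p : ℚ) / q⌋₊ 3
  suffices h : fareyTree.dist TV (stdTriangle 0) = fareyTree.dist TV (stdTriangle z) + z by
    omega
  rcases Nat.eq_zero_or_pos z with hz | hz
  · simp [hz]
  obtain ⟨hlt, hne⟩ := min_floor_three_lt_and_ne_add_one hns hz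
  refine dist_stdTriangle_zero_of_rightOf hz
    (rightOf_of_adj hadj (rightOf_of_mem hTm ?_) hTm hTV ?_) <;> push_cast <;> assumption

theorem dist_triangle_V_to_stdTriangle_z (p q : ℕ) (hp : 1 ≤ p) (hq : 1 ≤ q)
    (hpq : Nat.Coprime p q) (hns : (p : ℚ) / (q : ℚ) ∉ ({1, 2, 3, 4} : Set ℚ))
    (Tm : FareyTriangle) (hTm : some ((p : ℚ) / (q : ℚ)) ∈ Tm.verts)
    (hmin : ∀ T' : FareyTriangle, some ((p : ℚ) / (q : ℚ)) ∈ T'.verts →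
      fareyTree.dist Tm (stdTriangle 0) ≤ fareyTree.dist T' (stdTriangle 0))
    (TV : FareyTriangle) (hadj : fareyTree.Adj Tm TV)
    (hTV : some ((p : ℚ) / (q : ℚ)) ∉ TV.verts) :
    (fareyTree.dist TV (stdTriangle ((min (p / q) 3 : ℕ) : ℤ)) : ℤ) =
        (fareyTree.dist TV (stdTriangle 0) : ℤ) -
          (fareyTree.dist (stdTriangle ((min (p / q) 3 : ℕ) : ℤ)) (stdTriangle 0) : ℤ) ∧
    (fareyTree.dist TV (stdTriangle ((min (p / q) 3 : ℕ) : ℤ)) : ℤ) =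
        (fareyTree.dist TV (stdTriangle 0) : ℤ) - ((min (p / q) 3 : ℕ) : ℤ) :=
  dist_triangle_V_to_stdTriangle_z_general p q hns Tm hTm TV hadj hTV
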